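/- arXiv:1301.6425 — 6 statements merged into one kernel-verified Lean document; each statement's English description precedes it below -/
import Mathlib

section
/- For every real x > 0, one has x/((1+x)·ln(1+x)) = ∫₁^∞ t/((t-1)·((ln(t-1))² + π²)) · 1/(x+t) dt. Consequently, the function x ↦ x/((1+x)·ln(1+x)) is a Stieltjes function (a representation of the form a/x + b + ∫₀^∞ dμ(s)/(s+x) with a = b = 0 and nonnegative density t ↦ t/((t-1)((ln(t-1))²+π²)) supported on (1,∞)). -/
/-!
For `s > 0`, `∫₀¹ s^c sin(πc) dc = π (s + 1) / (log² s + π²)`, so the density, written in the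
variable `s = t - 1`, is a superposition of the powers `s^(c-1)`. Integrating against `1 / (s + y)`
and exchanging the integrals, each power contributes the Mellin transform
`∫₀^∞ s^(c-1) / (s + y) ds = π y^(c-1) / sin(πc)`, a Beta integral evaluated by the reflection
formula. The factors `sin(πc)` cancel, leaving `∫₀¹ y^(c-1) dc = (y - 1) / (y log y)` with
`y = 1 + x`.
-/

open MeasureTheory Real Set

theorem ofReal_rpow_mul_one_sub_rpow {x : ℝ} (hx : x ∈ Icc (0:ℝ) 1) (u v : ℝ) :
    ((x ^ (u - 1) * (1 - x) ^ (v - 1) : ℝ) : ℂ)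
      = (x : ℂ) ^ ((u : ℂ) - 1) * (1 - (x : ℂ)) ^ ((v : ℂ) - 1) := by
  push_cast [Complex.ofReal_cpow hx.1, Complex.ofReal_cpow (sub_nonneg.2 hx.2)]
  rfl

theorem ofReal_integral_rpow_mul_one_sub_rpow (u v : ℝ) :
    ((∫ x in (0:ℝ)..1, x ^ (u - 1) * (1 - x) ^ (v - 1) : ℝ) : ℂ)
      = Complex.betaIntegral u v := by
  rw [Complex.betaIntegral, ← intervalIntegral.integral_ofReal]
  refine intervalIntegral.integral_congr fun x hx => ?_
  rw [uIcc_of_le zero_le_one] at hx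
  exact ofReal_rpow_mul_one_sub_rpow hx u v

theorem intervalIntegrable_rpow_mul_one_sub_rpow {u v : ℝ} (hu : 0 < u) (hv : 0 < v) :
    IntervalIntegrable (fun x : ℝ => x ^ (u - 1) * (1 - x) ^ (v - 1)) volume 0 1 := by
  have h := (Complex.betaIntegral_convergent (u := u) (v := v) (by simpa) (by simpa)).norm
  refine h.mono_fun (by fun_prop) (ae_restrict_of_forall_mem measurableSet_uIoc fun x hx => ?_)
  rw [uIoc_of_le zero_le_one] at hx
  dsimp only
  rw [← ofReal_rpow_mul_one_sub_rpow (Ioc_subset_Icc_self hx), Complex.norm_real, norm_norm]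

theorem integral_rpow_mul_one_sub_rpow_neg {c : ℝ} (hc : c ∈ Ioo (0:ℝ) 1) :
    ∫ x in (0:ℝ)..1, x ^ (c - 1) * (1 - x) ^ (-c) = π / sin (π * c) := by
  have h := congrArg Complex.re (ofReal_integral_rpow_mul_one_sub_rpow c (1 - c))
  rw [Complex.ofReal_re,
    ← ProbabilityTheory.beta_eq_betaIntegralReal _ _ hc.1 (by linarith [hc.2]),
    ProbabilityTheory.beta, add_sub_cancel, Real.Gamma_one, div_one,
    Real.Gamma_mul_Gamma_one_sub, sub_sub_cancel_left] at h
  exact h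

section Substitution

theorem hasDerivAt_mul_div_one_sub (y : ℝ) {x : ℝ} (hx : x ≠ 1) :
    HasDerivAt (fun x => y * x / (1 - x)) (y / (1 - x) ^ 2) x := by
  have h1x : 1 - x ≠ 0 := sub_ne_zero.2 hx.symm
  refine (((hasDerivAt_id x).const_mul y).div ((hasDerivAt_id x).const_sub 1) h1x).congr_deriv ?_
  simp only [id]
  field_simp
  ring

variable {y : ℝ}

theorem injOn_mul_div_one_sub (hy : y ≠ 0) : InjOn (fun x => y * x / (1 - x)) (Ioo 0 1) := by
  intro a ha b hb hab
  have ha1 : 1 - a ≠ 0 := by linarith [ha.2]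
  have hb1 : 1 - b ≠ 0 := by linarith [hb.2]
  field_simp at hab
  linarith

theorem image_mul_div_one_sub_Ioo (hy : 0 < y) :
    (fun x => y * x / (1 - x)) '' Ioo 0 1 = Ioi 0 := by
  ext s
  refine ⟨?_, fun (hs : 0 < s) => ⟨s / (s + y), ⟨by positivity, ?_⟩, ?_⟩⟩
  · rintro ⟨x, hx, rfl⟩
    exact div_pos (mul_pos hy hx.1) (by linarith [hx.2])
  · rw [div_lt_one (by positivity)]
    linarith
  · have : 0 < s + y := by positivity
    field_simp [hy.ne']
    ring

theorem integral_Ioi_eq_integral_Ioo_mul_div_one_sub (hy : 0 < y) (g : ℝ → ℝ) :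
    ∫ s in Ioi 0, g s = ∫ x in Ioo 0 1, y / (1 - x) ^ 2 * g (y * x / (1 - x)) := by
  rw [← image_mul_div_one_sub_Ioo hy, integral_image_eq_integral_abs_deriv_smul measurableSet_Ioo
    (fun x hx => (hasDerivAt_mul_div_one_sub y hx.2.ne).hasDerivWithinAt)
    (injOn_mul_div_one_sub hy.ne')]
  refine setIntegral_congr_fun measurableSet_Ioo fun x hx => ?_
  rw [smul_eq_mul, abs_of_pos (div_pos hy (by nlinarith [hx.2]))]

theorem integrableOn_Ioi_iff_integrableOn_Ioo_mul_div_one_sub (hy : 0 < y) (g : ℝ → ℝ) :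
    IntegrableOn g (Ioi 0) ↔
      IntegrableOn (fun x => y / (1 - x) ^ 2 * g (y * x / (1 - x))) (Ioo 0 1) := by
  rw [← image_mul_div_one_sub_Ioo hy, integrableOn_image_iff_integrableOn_abs_deriv_smul
    measurableSet_Ioo (fun x hx => (hasDerivAt_mul_div_one_sub y hx.2.ne).hasDerivWithinAt)
    (injOn_mul_div_one_sub hy.ne')]
  refine integrableOn_congr_fun (fun x hx => ?_) measurableSet_Ioo
  rw [smul_eq_mul, abs_of_pos (div_pos hy (by nlinarith [hx.2]))]

end Substitution

section Mellin

variable {c y : ℝ}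

theorem mul_rpow_div_add_comp_mul_div_one_sub (hy : 0 < y) {x : ℝ} (hx : x ∈ Ioo (0:ℝ) 1) :
    y / (1 - x) ^ 2 * ((y * x / (1 - x)) ^ (c - 1) / (y * x / (1 - x) + y))
      = y ^ (c - 1) * (x ^ (c - 1) * (1 - x) ^ (-c)) := by
  have hx1 : 0 < 1 - x := by linarith [hx.2]
  rw [div_rpow (mul_pos hy hx.1).le hx1.le, mul_rpow hy.le hx.1.le, rpow_sub_one hx1.ne' c,
    rpow_neg hx1.le]
  field_simp
  ring

theorem integrableOn_Ioi_rpow_div_add (hc : c ∈ Ioo (0:ℝ) 1) (hy : 0 < y) :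
    IntegrableOn (fun s => s ^ (c - 1) / (s + y)) (Ioi 0) := by
  rw [integrableOn_Ioi_iff_integrableOn_Ioo_mul_div_one_sub hy,
    integrableOn_congr_fun (fun x hx => mul_rpow_div_add_comp_mul_div_one_sub hy hx)
      measurableSet_Ioo]
  have hbeta := intervalIntegrable_rpow_mul_one_sub_rpow hc.1 (sub_pos.2 hc.2)
  rw [intervalIntegrable_iff_integrableOn_Ioo_of_le zero_le_one, sub_sub_cancel_left] at hbeta
  exact hbeta.const_mul _

theorem integral_Ioi_rpow_div_add (hc : c ∈ Ioo (0:ℝ) 1) (hy : 0 < y) :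
    ∫ s in Ioi 0, s ^ (c - 1) / (s + y) = π * y ^ (c - 1) / sin (π * c) := by
  rw [integral_Ioi_eq_integral_Ioo_mul_div_one_sub hy,
    setIntegral_congr_fun measurableSet_Ioo
      (fun x hx => mul_rpow_div_add_comp_mul_div_one_sub hy hx),
    integral_const_mul, ← integral_Ioc_eq_integral_Ioo,
    ← intervalIntegral.integral_of_le zero_le_one, integral_rpow_mul_one_sub_rpow_neg hc]
  ring

end Mellin

theorem integral_rpow_mul_sin_pi_mul {s : ℝ} (hs : 0 < s) :
    ∫ c in (0:ℝ)..1, s ^ c * sin (π * c) = π * (s + 1) / (log s ^ 2 + π ^ 2) := by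
  have hD : 0 < log s ^ 2 + π ^ 2 := by positivity
  have hderiv (c : ℝ) : HasDerivAt
      (fun c => s ^ c * (log s * sin (π * c) - π * cos (π * c)) / (log s ^ 2 + π ^ 2))
      (s ^ c * sin (π * c)) c := by
    have hpow := (hasDerivAt_id c).const_rpow hs
    have hsin := ((hasDerivAt_id c).const_mul π).sin
    have hcos := ((hasDerivAt_id c).const_mul π).cos
    refine (hpow.mul ((hsin.const_mul (log s)).sub (hcos.const_mul π))).div_const
      (log s ^ 2 + π ^ 2) |>.congr_deriv ?_
    simp only [id, Pi.sub_apply]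
    field_simp
    ring
  have hcont : Continuous fun c => s ^ c * sin (π * c) := by fun_prop (disch := exact hs.ne')
  rw [intervalIntegral.integral_eq_sub_of_hasDerivAt (fun c _ => hderiv c)
    (hcont.intervalIntegrable 0 1)]
  simp [field]

theorem integral_rpow_sub_one {y : ℝ} (hy₀ : 0 < y) (hy₁ : y ≠ 1) :
    ∫ c in (0:ℝ)..1, y ^ (c - 1) = (y - 1) / (y * log y) := by
  have hlog : log y ≠ 0 := log_ne_zero_of_pos_of_ne_one hy₀ hy₁
  have hderiv (c : ℝ) : HasDerivAt (fun c => y ^ (c - 1) / log y) (y ^ (c - 1)) c := by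
    simpa [hlog] using ((hasDerivAt_id c).sub_const 1).const_rpow hy₀ |>.div_const (log y)
  have hcont : Continuous fun c : ℝ => y ^ (c - 1) := by fun_prop (disch := exact hy₀.ne')
  rw [intervalIntegral.integral_eq_sub_of_hasDerivAt (fun c _ => hderiv c)
    (hcont.intervalIntegrable 0 1),
    sub_self, rpow_zero, zero_sub, rpow_neg_one]
  field_simp

theorem sin_pi_mul_pos {c : ℝ} (hc : c ∈ Ioo (0:ℝ) 1) : 0 < sin (π * c) :=
  sin_pos_of_pos_of_lt_pi (by nlinarith [pi_pos, hc.1]) (by nlinarith [pi_pos, hc.2])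

/-- The density `t / ((t - 1) ((log (t - 1))² + π²))` of the statement, at `t = s + 1`. -/
noncomputable def logPiDensity (s : ℝ) : ℝ := (s + 1) / (s * (log s ^ 2 + π ^ 2))

section Fubini

variable {y : ℝ}

theorem integral_Ioi_rpow_mul_sin_div_add {c : ℝ} (hc : c ∈ Ioo (0:ℝ) 1) (hy : 0 < y) :
    ∫ s in Ioi 0, s ^ (c - 1) * sin (π * c) / (s + y) = π * y ^ (c - 1) := by
  have hsin := (sin_pi_mul_pos hc).ne'
  simp_rw [mul_div_right_comm _ (sin (π * c))]
  rw [integral_mul_const, integral_Ioi_rpow_div_add hc hy]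
  field_simp

theorem integral_Ioo_rpow_mul_sin_div_add {s : ℝ} (hs : 0 < s) (y : ℝ) :
    ∫ c in Ioo (0:ℝ) 1, s ^ (c - 1) * sin (π * c) / (s + y)
      = π * (logPiDensity s / (s + y)) := by
  have hpt (c : ℝ) : s ^ (c - 1) * sin (π * c) / (s + y)
      = s ^ c * sin (π * c) * (s * (s + y))⁻¹ := by
    rw [rpow_sub_one hs.ne']
    field_simp
  simp_rw [hpt]
  rw [integral_mul_const, ← integral_Ioc_eq_integral_Ioo,
    ← intervalIntegral.integral_of_le zero_le_one, integral_rpow_mul_sin_pi_mul hs, logPiDensity]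
  field_simp

theorem integrable_rpow_mul_sin_div_add (hy : 0 < y) :
    Integrable (Function.uncurry fun s c : ℝ => s ^ (c - 1) * sin (π * c) / (s + y))
      ((volume.restrict (Ioi 0)).prod (volume.restrict (Ioo 0 1))) := by
  rw [integrable_prod_iff' (by fun_prop : Measurable _).aestronglyMeasurable]
  refine ⟨ae_restrict_of_forall_mem measurableSet_Ioo fun c hc => ?_, ?_⟩
  · simp_rw [Function.uncurry_apply_pair, mul_div_right_comm _ (sin (π * c))]
    exact (integrableOn_Ioi_rpow_div_add hc hy).mul_const _
  · have hnorm : ∀ c ∈ Ioo (0:ℝ) 1,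
        ∫ s in Ioi 0, ‖s ^ (c - 1) * sin (π * c) / (s + y)‖ = π * y ^ (c - 1) := by
      intro c hc
      rw [← integral_Ioi_rpow_mul_sin_div_add hc hy]
      refine setIntegral_congr_fun measurableSet_Ioi fun s (hs : 0 < s) => norm_of_nonneg ?_
      have := (sin_pi_mul_pos hc).le
      positivity
    refine Integrable.congr ?_
      ((ae_restrict_mem measurableSet_Ioo).mono fun c hc => (hnorm c hc).symm)
    exact (continuous_const.mul (continuous_const.rpow (continuous_id.sub continuous_const)
      fun _ => Or.inl hy.ne')).integrableOn_Icc.mono_set Ioo_subset_Icc_self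

theorem integral_Ioi_logPiDensity_div_add (hy₀ : 0 < y) (hy₁ : y ≠ 1) :
    ∫ s in Ioi 0, logPiDensity s / (s + y) = (y - 1) / (y * log y) := by
  have hswap := integral_integral_swap (integrable_rpow_mul_sin_div_add hy₀)
  rw [setIntegral_congr_fun measurableSet_Ioi fun s hs => integral_Ioo_rpow_mul_sin_div_add hs y,
    setIntegral_congr_fun measurableSet_Ioo fun c hc => integral_Ioi_rpow_mul_sin_div_add hc hy₀,
    integral_const_mul, integral_const_mul, ← integral_Ioc_eq_integral_Ioo,
    ← intervalIntegral.integral_of_le zero_le_one, integral_rpow_sub_one hy₀ hy₁] at hswap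
  exact mul_left_cancel₀ pi_ne_zero hswap

theorem integrableOn_Ioi_logPiDensity_div_add (hy : 0 < y) :
    IntegrableOn (fun s => logPiDensity s / (s + y)) (Ioi 0) := by
  have h := (integrable_rpow_mul_sin_div_add hy).integral_prod_left.const_mul π⁻¹
  refine (integrableOn_congr_fun (fun s hs => ?_) measurableSet_Ioi).1 h
  simp only [Function.uncurry_apply_pair]
  rw [integral_Ioo_rpow_mul_sin_div_add hs y, inv_mul_cancel_left₀ pi_ne_zero]

end Fubini

theorem setIntegral_Ioi_comp_add_right (f : ℝ → ℝ) (a b : ℝ) :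
    ∫ s in Ioi a, f (s + b) = ∫ t in Ioi (a + b), f t := by
  have := (measurePreserving_add_right volume b).setIntegral_preimage_emb
    (measurableEmbedding_addRight b) f (Ioi (a + b))
  simpa [preimage_add_const_Ioi] using this

theorem integrableOn_Ioi_comp_add_right_iff (f : ℝ → ℝ) (a b : ℝ) :
    IntegrableOn (fun s => f (s + b)) (Ioi a) ↔ IntegrableOn f (Ioi (a + b)) := by
  have := (measurePreserving_add_right volume b).integrableOn_comp_preimage
    (measurableEmbedding_addRight b) (f := f) (s := Ioi (a + b))
  simpa [preimage_add_const_Ioi, Function.comp_def] using this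

/-- For every real `x > 0`,
`x/((1+x)·ln(1+x)) = ∫₁^∞ t/((t-1)·((ln(t-1))² + π²)) · 1/(x+t) dt`.
Consequently `x ↦ x/((1+x)·ln(1+x))` is a Stieltjes function: it has the representation
`a/x + b + ∫ dμ(s)/(s+x)` with `a = b = 0` and nonnegative density
`t ↦ t/((t-1)((ln(t-1))²+π²))` on `(1,∞)`, which moreover satisfies the
integrability requirement `∫ dμ(s)/(1+s) < ∞`. -/
theorem stmt_1 :
    (∀ x : ℝ, 0 < x →
      x / ((1 + x) * Real.log (1 + x)) =
        ∫ t in Set.Ioi (1 : ℝ),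
          t / ((t - 1) * ((Real.log (t - 1)) ^ 2 + Real.pi ^ 2)) * (x + t)⁻¹) ∧
    (∀ t ∈ Set.Ioi (1 : ℝ), 0 ≤ t / ((t - 1) * ((Real.log (t - 1)) ^ 2 + Real.pi ^ 2))) ∧
    IntegrableOn
      (fun t : ℝ => t / ((t - 1) * ((Real.log (t - 1)) ^ 2 + Real.pi ^ 2)) * (1 + t)⁻¹)
      (Set.Ioi (1 : ℝ)) := by
  have hdensity (x s : ℝ) :
      (s + 1) / ((s + 1 - 1) * (log (s + 1 - 1) ^ 2 + π ^ 2)) * (x + (s + 1))⁻¹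
        = logPiDensity s / (s + (1 + x)) := by
    rw [add_sub_cancel_right, logPiDensity, div_eq_mul_inv _ (s + (1 + x)),
      show s + (1 + x) = x + (s + 1) by ring]
  refine ⟨fun x hx => ?_, fun t (ht : 1 < t) => ?_, ?_⟩
  · rw [show Ioi (1:ℝ) = Ioi (0 + 1) by rw [zero_add], ← setIntegral_Ioi_comp_add_right]
    simp_rw [hdensity]
    rw [integral_Ioi_logPiDensity_div_add (by positivity) (by linarith), add_sub_cancel_left]
  · have : 0 < t - 1 := sub_pos.2 ht
    positivity
  · rw [show Ioi (1:ℝ) = Ioi (0 + 1) by rw [zero_add], ← integrableOn_Ioi_comp_add_right_iff]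
    simp_rw [hdensity]
    exact integrableOn_Ioi_logPiDensity_div_add (by norm_num)
end

section
/- The function F(x) = x/((1+x)·ln(1+x)) is completely monotonic on (0,∞); that is, F has derivatives of all orders on (0,∞) and (-1)ⁿ F⁽ⁿ⁾(x) ≥ 0 for every x > 0 and every integer n ≥ 0. -/
open Real MeasureTheory intervalIntegral

noncomputable def myc (n : ℕ) (t : ℝ) : ℝ := ∏ k ∈ Finset.range n, (t + k)

noncomputable def myG (n : ℕ) (x : ℝ) : ℝ :=
  ∫ t in (0:ℝ)..1, myc n t * Real.exp (-(t + n) * Real.log (1 + x))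

lemma myc_nonneg {n : ℕ} {t : ℝ} (ht : 0 ≤ t) : 0 ≤ myc n t := by
  apply Finset.prod_nonneg
  intro k _
  positivity

lemma myc_le {n : ℕ} {t : ℝ} (ht : 0 ≤ t) (ht1 : t ≤ 1) : myc n t ≤ (n+1:ℝ)^n := by
  calc myc n t ≤ ∏ k ∈ Finset.range n, (n+1:ℝ) := by
        apply Finset.prod_le_prod
        · intro k _; positivity
        · intro k hk
          have : (k:ℝ) ≤ n - 1 := by
            have := Finset.mem_range.1 hk
            have : (k:ℝ) + 1 ≤ n := by exact_mod_cast this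
            linarith
          linarith
    _ = (n+1:ℝ)^n := by simp [Finset.prod_const]

lemma cont_integrand (n : ℕ) (x : ℝ) :
    Continuous (fun t : ℝ => myc n t * Real.exp (-(t + n) * Real.log (1 + x))) := by
  apply Continuous.mul
  · unfold myc; exact continuous_finset_prod _ fun k _ => by continuity
  · exact Real.continuous_exp.comp (by continuity)

lemma myG_nonneg {n : ℕ} {x : ℝ} : 0 ≤ myG n x := by
  apply intervalIntegral.integral_nonneg (by norm_num)
  intro t ht
  have := myc_nonneg (n := n) ht.1
  positivity

lemma hasDerivAt_myG (n : ℕ) {x : ℝ} (hx : 0 < x) :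
    HasDerivAt (myG n) (-(myG (n+1) x)) x := by
  have key := intervalIntegral.hasDerivAt_integral_of_dominated_loc_of_deriv_le
    (μ := volume) (a := 0) (b := 1) (x₀ := x) (s := Metric.ball x (x/2))
    (F := fun y t => myc n t * Real.exp (-(t + n) * Real.log (1 + y)))
    (F' := fun y t => -(myc (n+1) t * Real.exp (-(t + (n+1:ℕ)) * Real.log (1 + y))))
    (bound := fun _ => (n+2:ℝ)^(n+1))
    (Metric.ball_mem_nhds x (by positivity))
    (Filter.Eventually.of_forall fun y => ((cont_integrand n y).aestronglyMeasurable).restrict)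
    ((cont_integrand n x).intervalIntegrable 0 1)
    (((cont_integrand (n+1) x).neg).aestronglyMeasurable.restrict)
    ?_ (intervalIntegrable_const) ?_
  · have h2 : (∫ t in (0:ℝ)..1, -(myc (n+1) t * Real.exp (-(t + (n+1:ℕ)) * Real.log (1 + x))))
        = -(myG (n+1) x) := by
      rw [intervalIntegral.integral_neg]; rfl
    exact h2 ▸ key.2
  · apply Filter.Eventually.of_forall
    intro t ht y hy
    have ht0 : 0 < t := by
      rcases Set.mem_uIoc.1 ht with h | h
      · exact h.1
      · linarith [h.1, h.2]
    have ht1 : t ≤ 1 := by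
      rcases Set.mem_uIoc.1 ht with h | h
      · exact h.2
      · linarith [h.1, h.2]
    have hy0 : 0 < y := by
      have := Metric.mem_ball.1 hy
      have := abs_lt.1 (by simpa [Real.dist_eq] using this)
      linarith [this.1]
    have hlog : 0 ≤ Real.log (1 + y) := Real.log_nonneg (by linarith)
    have hexp : Real.exp (-(t + (n+1:ℕ)) * Real.log (1 + y)) ≤ 1 := by
      apply Real.exp_le_one_iff.2
      have h0 : (0:ℝ) ≤ t + (n+1:ℕ) := by positivity
      nlinarith [mul_nonneg h0 hlog]
    have hexp0 : 0 < Real.exp (-(t + (n+1:ℕ)) * Real.log (1 + y)) := Real.exp_pos _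
    have hc := myc_nonneg (n := n+1) ht0.le
    have hcle := myc_le (n := n+1) ht0.le ht1
    rw [norm_neg, Real.norm_eq_abs, abs_of_nonneg (by positivity)]
    calc myc (n+1) t * Real.exp (-(t + (n+1:ℕ)) * Real.log (1 + y))
        ≤ (n+1+1:ℝ)^(n+1) * 1 := by
          apply mul_le_mul _ hexp hexp0.le (by positivity)
          simpa using hcle
      _ = (n+2:ℝ)^(n+1) := by ring_nf
  · apply Filter.Eventually.of_forall
    intro t ht y hy
    have hy0 : 0 < y := by
      have := Metric.mem_ball.1 hy
      have := abs_lt.1 (by simpa [Real.dist_eq] using this)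
      linarith [this.1]
    have h1y : (0:ℝ) < 1 + y := by linarith
    have hlog : HasDerivAt (fun z : ℝ => Real.log (1 + z)) (1/(1+y)) y := by
      have : HasDerivAt (fun z : ℝ => 1 + z) 1 y := by
        simpa using (hasDerivAt_id y).const_add (1:ℝ)
      exact ((Real.hasDerivAt_log h1y.ne').comp y this).congr_deriv (by simp)
    have h2 : HasDerivAt (fun z : ℝ => -(t + n) * Real.log (1 + z))
        (-(t + n) * (1/(1+y))) y := hlog.const_mul _
    have h3 : HasDerivAt (fun z : ℝ => Real.exp (-(t + n) * Real.log (1 + z)))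
        (Real.exp (-(t + n) * Real.log (1 + y)) * (-(t + n) * (1/(1+y)))) y :=
      (Real.hasDerivAt_exp _).comp y h2
    have h4 := h3.const_mul (myc n t)
    have hinv : 1/(1+y) = Real.exp (-Real.log (1+y)) := by
      rw [Real.exp_neg, Real.exp_log h1y]; simp
    have hsplit : Real.exp (-(t + (n+1:ℕ)) * Real.log (1 + y))
        = Real.exp (-(t + n) * Real.log (1 + y)) * Real.exp (-Real.log (1+y)) := by
      rw [← Real.exp_add]
      congr 1
      push_cast
      ring
    have hcs : myc (n+1) t = myc n t * (t + n) := by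
      unfold myc; rw [Finset.prod_range_succ]
    have heq : myc n t * (Real.exp (-(t + n) * Real.log (1 + y)) * (-(t + n) * (1/(1+y))))
        = -(myc (n+1) t * Real.exp (-(t + (n+1:ℕ)) * Real.log (1 + y))) := by
      rw [hcs, hsplit, hinv]; ring
    simpa only [heq] using h4

lemma base_eq {x : ℝ} (hx : 0 < x) :
    x / ((1 + x) * Real.log (1 + x)) = myG 0 x := by
  have h1x : (0:ℝ) < 1 + x := by linarith
  have hL : 0 < Real.log (1 + x) := Real.log_pos (by linarith)
  set L := Real.log (1 + x) with hLdef
  have hanti : ∀ t ∈ Set.uIcc (0:ℝ) 1,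
      HasDerivAt (fun t : ℝ => -Real.exp (-t * L) / L) (Real.exp (-t * L)) t := by
    intro t _
    have h2 : HasDerivAt (fun t : ℝ => -t * L) (-L) t := by
      simpa using ((hasDerivAt_id t).neg.mul_const L)
    have h3 : HasDerivAt (fun t : ℝ => Real.exp (-t * L)) (Real.exp (-t * L) * (-L)) t :=
      (Real.hasDerivAt_exp _).comp t h2
    have h4 := (h3.neg).div_const L
    have e : Real.exp (-t * L) = -(Real.exp (-t * L) * -L) / L := by
      rw [mul_neg, neg_neg, mul_div_assoc, div_self hL.ne', mul_one]
    rw [e]; exact h4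
  have hint : IntervalIntegrable (fun t : ℝ => Real.exp (-t * L)) volume 0 1 :=
    (Real.continuous_exp.comp (by continuity)).intervalIntegrable 0 1
  have := intervalIntegral.integral_eq_sub_of_hasDerivAt hanti hint
  have hG : myG 0 x = ∫ t in (0:ℝ)..1, Real.exp (-t * L) := by
    unfold myG myc
    simp [hLdef]
  rw [hG, this]
  have hexpL : Real.exp (-(1:ℝ) * L) = 1/(1+x) := by
    rw [neg_one_mul, Real.exp_neg, Real.exp_log h1x]
    simp
  rw [hexpL]
  simp only [neg_zero, zero_mul, Real.exp_zero]
  field_simp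
  ring

lemma iter_eq (n : ℕ) : ∀ x : ℝ, 0 < x →
    iteratedDeriv n (fun x : ℝ => x / ((1 + x) * Real.log (1 + x))) x
      = (-1:ℝ)^n * myG n x := by
  induction n with
  | zero =>
    intro x hx
    simp [iteratedDeriv_zero, base_eq hx]
  | succ n ih =>
    intro x hx
    rw [iteratedDeriv_succ]
    have hev : iteratedDeriv n (fun x : ℝ => x / ((1 + x) * Real.log (1 + x)))
        =ᶠ[nhds x] (fun y => (-1:ℝ)^n * myG n y) := by
      filter_upwards [IsOpen.mem_nhds isOpen_Ioi (Set.mem_Ioi.2 hx)] with y hy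
      exact ih y hy
    rw [hev.deriv_eq]
    have hd := (hasDerivAt_myG n hx).const_mul ((-1:ℝ)^n)
    rw [hd.deriv]
    ring

/-- The function `F(x) = x/((1+x)·ln(1+x))` is completely monotonic on `(0,∞)`:
it has derivatives of all orders there and `(-1)ⁿ F⁽ⁿ⁾(x) ≥ 0` for all `x > 0`, `n ≥ 0`. -/
theorem stmt_2 :
    ContDiffOn ℝ (⊤ : ℕ∞) (fun x : ℝ => x / ((1 + x) * Real.log (1 + x))) (Set.Ioi 0) ∧
    ∀ n : ℕ, ∀ x : ℝ, 0 < x →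
      0 ≤ (-1 : ℝ) ^ n *
        iteratedDeriv n (fun x : ℝ => x / ((1 + x) * Real.log (1 + x))) x := by
  constructor
  · apply ContDiffOn.div contDiffOn_id
    · apply ContDiffOn.mul (by fun_prop)
      intro x hx
      have hx0 : (0:ℝ) < x := hx
      have h1x : (0:ℝ) < 1 + x := by linarith
      exact ((Real.contDiffAt_log.2 h1x.ne').comp x
        (by fun_prop : ContDiffAt ℝ (⊤ : ℕ∞) (fun y : ℝ => 1 + y) x)).contDiffWithinAt
    · intro x hx
      have hx0 : (0:ℝ) < x := hx
      have h1x : (0:ℝ) < 1 + x := by linarith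
      have hL : 0 < Real.log (1 + x) := Real.log_pos (by linarith)
      positivity
  · intro n x hx
    rw [iter_eq n x hx, ← mul_assoc, ← mul_pow]
    simpa using myG_nonneg (n := n) (x := x)
end

section
/- The sequence μₙ = (-1)ⁿ b_{n+1}, n = 0, 1, 2, …, where bₙ are the Bernoulli numbers of the second kind, is a completely monotonic sequence: μₙ ≥ 0 for all n and (-1)^k Δ^k μₙ ≥ 0 for all integers n, k ≥ 0, where Δ^k μₙ = Σ_{m=0}^k (-1)^m C(k,m) μ_{n+k-m}. -/
/-!
Integrating the binomial series `(1 + x) ^ s = ∑ₙ choose s n * xⁿ` over `s ∈ [0, 1]` and using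
`∫₀¹ (1 + x) ^ s ds = x / log (1 + x)` gives, by uniqueness of power series coefficients,
`bₙ = ∫₀¹ choose s n ds`, hence
`μⱼ = (-1)ʲ b_{j+1} = ∫₀¹ s (1 - s)⁽ʲ⁾ / (j + 1)! ds` with the rising factorial `α⁽ʲ⁾`.
For fixed `α` the sequence `gⱼ = α⁽ʲ⁾ / (j + 1)!` has the explicit iterated differences
`(-1)ᵏ Δᵏ gₙ = (2 - α)⁽ᵏ⁾ α⁽ⁿ⁾ / (n + k + 1)!`, which are nonnegative for `α = 1 - s ∈ [0, 1]`;
integrating in `s` shows that `μ` is completely monotonic.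
-/

open Finset Polynomial fwdDiff Nat

namespace Ring

variable {K : Type*} [Field K] [CharZero K]

theorem choose_succ_eq_mul_div (s : K) (n : ℕ) :
    Ring.choose s (n + 1) = Ring.choose s n * (s - n) / (n + 1) := by
  have h := Ring.choose_smul_choose s (Nat.le_add_right n 1)
  rw [Nat.choose_succ_self_right, Nat.add_sub_cancel_left, Ring.choose_one_right,
    nsmul_eq_mul] at h
  rw [← h]
  field_simp
  push_cast
  ring

theorem neg_one_pow_mul_choose_succ (s : K) (j : ℕ) :
    (-1) ^ j * Ring.choose s (j + 1) = s * ((ascPochhammer K j).eval (1 - s) / (j + 1)!) := by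
  induction j with
  | zero => simp
  | succ j ih =>
    rw [choose_succ_eq_mul_div, ascPochhammer_succ_eval, Nat.factorial_succ, pow_succ]
    calc (-1) ^ j * (-1) * (Ring.choose s (j + 1) * (s - (j + 1 : ℕ)) / ((j + 1 : ℕ) + 1))
        = (-1) ^ j * Ring.choose s (j + 1) * (1 - s + j) / (j + 2) := by push_cast; ring
      _ = _ := by rw [ih]; field_simp; push_cast; ring

theorem continuous_choose (n : ℕ) : Continuous fun s : ℝ => Ring.choose s n := by
  induction n with
  | zero => simpa only [Ring.choose_zero_right] using continuous_const
  | succ n ih =>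
    simp only [choose_succ_eq_mul_div]
    fun_prop

theorem abs_choose_le_one {s : ℝ} (hs : s ∈ Set.Icc 0 1) (n : ℕ) : |Ring.choose s n| ≤ 1 := by
  induction n with
  | zero => simp
  | succ n ih =>
    have hsn : |s - n| ≤ n + 1 := abs_le.mpr ⟨by linarith [hs.1], by linarith [hs.2]⟩
    rw [choose_succ_eq_mul_div, abs_div, abs_mul, abs_of_pos (by positivity : (0 : ℝ) < n + 1),
      div_le_one (by positivity)]
    calc |Ring.choose s n| * |s - n| ≤ 1 * (n + 1) := by gcongr
      _ = n + 1 := one_mul _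

end Ring

theorem integral_one_add_rpow {x : ℝ} (hx : -1 < x) :
    ∫ s in (0 : ℝ)..1, (1 + x) ^ s = if x = 0 then 1 else x / Real.log (1 + x) := by
  split_ifs with hx0
  · simp [hx0]
  have hpos : 0 < 1 + x := by linarith
  have hlog : Real.log (1 + x) ≠ 0 :=
    Real.log_ne_zero_of_pos_of_ne_one hpos (by simpa using hx0)
  have hderiv (s : ℝ) :
      HasDerivAt (fun s => (1 + x) ^ s / Real.log (1 + x)) ((1 + x) ^ s) s := by
    simpa [hlog] using
      (Real.hasStrictDerivAt_const_rpow hpos s).hasDerivAt.div_const (Real.log (1 + x))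
  rw [intervalIntegral.integral_eq_sub_of_hasDerivAt (fun s _ => hderiv s)
    ((continuous_const.rpow continuous_id fun _ => Or.inl hpos.ne').intervalIntegrable _ _)]
  simp only [Real.rpow_one, Real.rpow_zero]
  ring

theorem hasSum_integral_choose_mul_pow {x : ℝ} (hx : |x| < 1) :
    HasSum (fun n => (∫ s in (0 : ℝ)..1, Ring.choose s n) * x ^ n)
      (∫ s in (0 : ℝ)..1, (1 + x) ^ s) := by
  simp only [← intervalIntegral.integral_mul_const]
  refine intervalIntegral.hasSum_integral_of_dominated_convergence (fun n _ => |x| ^ n)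
    (fun n => ((Ring.continuous_choose n).mul continuous_const).aestronglyMeasurable)
    (fun n => Filter.Eventually.of_forall fun s hs => ?_)
    (Filter.Eventually.of_forall fun _ _ => summable_geometric_of_lt_one (abs_nonneg x) hx)
    intervalIntegrable_const
    (Filter.Eventually.of_forall fun s _ => ?_)
  · have hs' : s ∈ Set.Icc (0 : ℝ) 1 := by simpa using Set.uIoc_subset_uIcc hs
    rw [Real.norm_eq_abs, abs_mul, abs_pow]
    exact mul_le_of_le_one_left (by positivity) (Ring.abs_choose_le_one hs' n)
  · have hx' : x ∈ Metric.eball (0 : ℝ) 1 := by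
      simpa [Metric.mem_eball, edist_zero_right, Real.enorm_eq_ofReal_abs] using hx
    simpa [binomialSeries, FormalMultilinearSeries.ofScalars_apply_eq, mul_comm] using
      Real.one_add_rpow_hasFPowerSeriesOnBall_zero.hasSum hx'

theorem hasFPowerSeriesAt_ofScalars_of_hasSum {a : ℕ → ℝ} {f : ℝ → ℝ} {r : ℝ} (hr : 0 < r)
    (h : ∀ x, |x| < r → HasSum (fun n => a n * x ^ n) (f x)) :
    HasFPowerSeriesAt f (FormalMultilinearSeries.ofScalars ℝ a) 0 := by
  obtain ⟨ρ, hρ0, hρr⟩ := exists_between hr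
  lift ρ to NNReal using hρ0.le
  refine ⟨ρ, ?_, by simpa using hρ0, fun {y} hy => ?_⟩
  · refine FormalMultilinearSeries.le_radius_of_tendsto _ (l := 0) ?_
    simpa [FormalMultilinearSeries.ofScalars_norm] using
      (h ρ (by simpa using hρr)).summable.tendsto_atTop_zero.norm
  · have hy' : |y| < ρ := by simpa using hy
    simpa [FormalMultilinearSeries.ofScalars_apply_eq, mul_comm] using h y (hy'.trans hρr)

theorem eq_of_hasSum_mul_pow {a b : ℕ → ℝ} {f : ℝ → ℝ} {r : ℝ} (hr : 0 < r)
    (ha : ∀ x, |x| < r → HasSum (fun n => a n * x ^ n) (f x))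
    (hb : ∀ x, |x| < r → HasSum (fun n => b n * x ^ n) (f x)) : a = b :=
  FormalMultilinearSeries.ofScalars_series_injective ℝ ℝ
    ((hasFPowerSeriesAt_ofScalars_of_hasSum hr ha).eq_formalMultilinearSeries
      (hasFPowerSeriesAt_ofScalars_of_hasSum hr hb))

theorem eq_integral_choose_of_hasSum {b : ℕ → ℝ}
    (hb : ∀ x : ℝ, |x| < 1 →
      HasSum (fun n => b n * x ^ n) (if x = 0 then 1 else x / Real.log (1 + x))) :
    b = fun n => ∫ s in (0 : ℝ)..1, Ring.choose s n :=
  eq_of_hasSum_mul_pow one_pos hb fun x hx => by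
    rw [← integral_one_add_rpow (abs_lt.mp hx).1]
    exact hasSum_integral_choose_mul_pow hx

theorem fwdDiff_iter_eq_sum_shift_rev {R : Type*} [CommRing R] (f : ℕ → R) (n k : ℕ) :
    (Δ_[1])^[k] f n = ∑ m ∈ range (k + 1), (-1) ^ m * (k.choose m) * f (n + k - m) := by
  rw [fwdDiff_iter_eq_sum_shift, ← sum_range_reflect]
  refine sum_congr rfl fun m hm => ?_
  have hm : m ≤ k := Nat.lt_succ_iff.mp (mem_range.mp hm)
  rw [Nat.add_sub_cancel, Nat.sub_sub_self hm, Nat.choose_symm hm, smul_eq_mul, mul_one,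
    zsmul_eq_mul, ← Nat.add_sub_assoc hm]
  push_cast
  ring

theorem fwdDiff_iter_intervalIntegral {M : Type*} [AddCommMonoid M] (h : M) {F : ℝ → M → ℝ}
    {a b : ℝ} (hF : ∀ y, IntervalIntegrable (fun s => F s y) MeasureTheory.volume a b)
    (k : ℕ) (y : M) :
    (Δ_[h])^[k] (fun y => ∫ s in a..b, F s y) y = ∫ s in a..b, (Δ_[h])^[k] (F s) y := by
  simp only [fwdDiff_iter_eq_sum_shift, zsmul_eq_mul]
  rw [intervalIntegral.integral_finsetSum fun i _ => (hF _).const_mul _]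
  simp only [intervalIntegral.integral_const_mul]

theorem neg_one_pow_mul_fwdDiff_iter_ascPochhammer_div_factorial {K : Type*} [Field K]
    [CharZero K] (α : K) (k n : ℕ) :
    (-1) ^ k * (Δ_[1])^[k] (fun j => (ascPochhammer K j).eval α / (j + 1)!) n
      = (ascPochhammer K k).eval (2 - α) * (ascPochhammer K n).eval α / (n + k + 1)! := by
  induction k generalizing n with
  | zero => simp
  | succ k ih =>
    rw [Function.iterate_succ_apply', fwdDiff, pow_succ]
    calc (-1) ^ k * (-1) * ((Δ_[1])^[k] (fun j => (ascPochhammer K j).eval α / (j + 1)!) (n + 1)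
          - (Δ_[1])^[k] (fun j => (ascPochhammer K j).eval α / (j + 1)!) n)
        = (-1) ^ k * (Δ_[1])^[k] (fun j => (ascPochhammer K j).eval α / (j + 1)!) n
          - (-1) ^ k * (Δ_[1])^[k] (fun j => (ascPochhammer K j).eval α / (j + 1)!) (n + 1) := by
          ring
      _ = _ := by
        have hfac : ((n + k + 1 + 1)! : K) = (n + k + 2) * (n + k + 1)! := by
          push_cast [factorial_succ]
          ring
        rw [ih, ih, ascPochhammer_succ_eval, ascPochhammer_succ_eval,
          show n + 1 + k + 1 = n + k + 1 + 1 by ring, show n + (k + 1) + 1 = n + k + 1 + 1 by ring,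
          hfac]
        have hne : (n + k + 2 : K) ≠ 0 := by exact_mod_cast (n + k + 1).succ_ne_zero
        have hfac_ne : ((n + k + 1)! : K) ≠ 0 := by exact_mod_cast factorial_ne_zero _
        field_simp
        ring

theorem ascPochhammer_eval_nonneg {S : Type*} [Semiring S] [PartialOrder S]
    [IsStrictOrderedRing S] {s : S} (hs : 0 ≤ s) (n : ℕ) : 0 ≤ (ascPochhammer S n).eval s := by
  induction n with
  | zero => simp
  | succ n ih => rw [ascPochhammer_succ_eval]; positivity

theorem neg_one_pow_mul_fwdDiff_iter_mul_ascPochhammer_nonneg {s : ℝ} (hs : s ∈ Set.Icc 0 1)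
    (k n : ℕ) :
    0 ≤ (-1) ^ k * (Δ_[1])^[k] (fun j => s * ((ascPochhammer ℝ j).eval (1 - s) / (j + 1)!)) n := by
  rw [show (fun j : ℕ => s * ((ascPochhammer ℝ j).eval (1 - s) / (j + 1)!))
      = s • fun j : ℕ => (ascPochhammer ℝ j).eval (1 - s) / (j + 1)! from rfl,
    fwdDiff_iter_const_smul, Pi.smul_apply, smul_eq_mul, mul_left_comm,
    neg_one_pow_mul_fwdDiff_iter_ascPochhammer_div_factorial]
  have hs₀ : 0 ≤ s := hs.1
  have hrising_k := ascPochhammer_pos k (2 - (1 - s)) (by linarith)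
  have hrising_n := ascPochhammer_eval_nonneg (sub_nonneg.mpr hs.2) n
  positivity

/-- The sequence `μₙ = (-1)ⁿ b_{n+1}` of Bernoulli numbers of the second kind (where `bₙ`
is the `n`-th Taylor coefficient at `0` of `x ↦ x/ln(1+x)`, extended by the value `1` at
`x = 0`) is a completely monotonic sequence: `μₙ ≥ 0` and
`(-1)^k Δ^k μₙ = (-1)^k Σ_{m=0}^k (-1)^m C(k,m) μ_{n+k-m} ≥ 0` for all `n, k ≥ 0`. -/
theorem stmt_4 (b : ℕ → ℝ)
    (hb : ∀ x : ℝ, |x| < 1 →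
      HasSum (fun n : ℕ => b n * x ^ n)
        (if x = 0 then 1 else x / Real.log (1 + x))) :
    (∀ n : ℕ, 0 ≤ (-1 : ℝ) ^ n * b (n + 1)) ∧
    (∀ n k : ℕ,
      0 ≤ (-1 : ℝ) ^ k *
        ∑ m ∈ Finset.range (k + 1),
          (-1 : ℝ) ^ m * (k.choose m) * ((-1 : ℝ) ^ (n + k - m) * b (n + k - m + 1))) := by
  have hμ : (fun j => (-1 : ℝ) ^ j * b (j + 1))
      = fun j => ∫ s in (0 : ℝ)..1, s * ((ascPochhammer ℝ j).eval (1 - s) / (j + 1)!) := by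
    funext j
    rw [eq_integral_choose_of_hasSum hb, ← intervalIntegral.integral_const_mul]
    simp only [Ring.neg_one_pow_mul_choose_succ]
  have hcm (n k : ℕ) : 0 ≤ (-1 : ℝ) ^ k * (Δ_[1])^[k] (fun j => (-1 : ℝ) ^ j * b (j + 1)) n := by
    rw [hμ, fwdDiff_iter_intervalIntegral 1
        fun j => (by fun_prop : Continuous _).intervalIntegrable _ _,
      ← intervalIntegral.integral_const_mul]
    exact intervalIntegral.integral_nonneg zero_le_one fun s hs =>
      neg_one_pow_mul_fwdDiff_iter_mul_ascPochhammer_nonneg hs k n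
  refine ⟨fun n => by simpa using hcm n 0, fun n k => ?_⟩
  simpa only [fwdDiff_iter_eq_sum_shift_rev] using hcm n k
end

section
/- For every real r > 2 and every θ ∈ (-π, π), one has |F(r e^{iθ})| ≤ r/((r-1)·ln(r-1)), where F(z) = z/((1+z)·Log(1+z)). Consequently, sup_{θ ∈ (-π,π)} |F(r e^{iθ})| → 0 as r → ∞; i.e., F(z) tends to 0 uniformly in θ as r = |z| → ∞. -/
open Real Complex Filter

/-!
Since `Re (Log w) = ln ‖w‖`, we have `‖Log w‖ ≥ ln ‖w‖`, and `‖1 + z‖ ≥ ‖z‖ - 1`. For `‖z‖ = r > 2`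
both lower bounds are positive, which gives `|F z| ≤ r / ((r - 1) ln (r - 1))`, uniformly in the
argument of `z`. This bound is at most `2 / ln (r - 1)`, which tends to `0`.
-/

theorem Complex.log_norm_le_norm_log (w : ℂ) : Real.log ‖w‖ ≤ ‖Complex.log w‖ := by
  rw [← Complex.log_re]
  exact (le_abs_self _).trans (Complex.abs_re_le_norm _)

theorem Complex.norm_div_one_add_mul_log_one_add_le {z : ℂ} (hz : 2 < ‖z‖) :
    ‖z / ((1 + z) * Complex.log (1 + z))‖ ≤ ‖z‖ / ((‖z‖ - 1) * Real.log (‖z‖ - 1)) := by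
  have h_one_add : ‖z‖ - 1 ≤ ‖1 + z‖ := by
    simpa [add_comm] using norm_sub_norm_le z (-1)
  have h_sub_pos : 0 < ‖z‖ - 1 := by linarith
  have h_log_pos : 0 < Real.log (‖z‖ - 1) := Real.log_pos (by linarith)
  have h_log : Real.log (‖z‖ - 1) ≤ ‖Complex.log (1 + z)‖ :=
    (Real.log_le_log (by linarith) h_one_add).trans (Complex.log_norm_le_norm_log _)
  rw [norm_div, norm_mul]
  gcongr

theorem Complex.norm_ofReal_mul_exp_mul_I {r : ℝ} (hr : 0 ≤ r) (θ : ℝ) :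
    ‖(r : ℂ) * Complex.exp (θ * Complex.I)‖ = r := by
  rw [norm_mul, Complex.norm_exp_ofReal_mul_I, mul_one, Complex.norm_of_nonneg hr]

theorem Complex.norm_ofReal_mul_exp_div_mul_log_le {r : ℝ} (hr : 2 < r) (θ : ℝ) :
    ‖(r : ℂ) * Complex.exp (θ * Complex.I) /
        ((1 + (r : ℂ) * Complex.exp (θ * Complex.I)) *
          Complex.log (1 + (r : ℂ) * Complex.exp (θ * Complex.I)))‖ ≤
      r / ((r - 1) * Real.log (r - 1)) := by
  have h_norm := Complex.norm_ofReal_mul_exp_mul_I (by linarith : (0 : ℝ) ≤ r) θ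
  have h_bound := Complex.norm_div_one_add_mul_log_one_add_le (h_norm ▸ hr)
  rwa [h_norm] at h_bound

theorem Real.div_sub_one_mul_log_sub_one_le {r : ℝ} (hr : 2 < r) :
    r / ((r - 1) * Real.log (r - 1)) ≤ 2 / Real.log (r - 1) := by
  have h_log_pos : 0 < Real.log (r - 1) := Real.log_pos (by linarith)
  rw [div_le_div_iff₀ (by nlinarith) h_log_pos]
  nlinarith

theorem Real.tendsto_const_div_log_sub_one_atTop (c : ℝ) :
    Tendsto (fun r : ℝ => c / Real.log (r - 1)) atTop (nhds 0) := by
  have h_log : Tendsto (fun r : ℝ => Real.log (r - 1)) atTop atTop :=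
    Real.tendsto_log_atTop.comp (tendsto_atTop_add_const_right _ (-1) tendsto_id)
  simpa [div_eq_mul_inv] using h_log.inv_tendsto_atTop.const_mul c

/-- For every `r > 2` and `θ ∈ (-π, π)`, `|F(r e^{iθ})| ≤ r/((r-1)·ln(r-1))`, where
`F(z) = z/((1+z)·Log(1+z))`. Consequently `sup_{θ ∈ (-π,π)} |F(r e^{iθ})| → 0` as
`r → ∞`, i.e. `F` tends to `0` uniformly in `θ`. -/
theorem stmt_6 :
    (∀ r : ℝ, 2 < r → ∀ θ ∈ Set.Ioo (-Real.pi) Real.pi,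
      ‖
          ((r : ℂ) * Complex.exp (θ * Complex.I) /
            ((1 + (r : ℂ) * Complex.exp (θ * Complex.I)) *
              Complex.log (1 + (r : ℂ) * Complex.exp (θ * Complex.I))))‖ ≤
        r / ((r - 1) * Real.log (r - 1))) ∧
    Tendsto
      (fun r : ℝ =>
        ⨆ θ : Set.Ioo (-Real.pi) Real.pi,
          ‖
            ((r : ℂ) * Complex.exp ((θ : ℝ) * Complex.I) /
              ((1 + (r : ℂ) * Complex.exp ((θ : ℝ) * Complex.I)) *
                Complex.log (1 + (r : ℂ) * Complex.exp ((θ : ℝ) * Complex.I))))‖)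
      atTop (nhds 0) := by
  refine ⟨fun r hr θ _ => Complex.norm_ofReal_mul_exp_div_mul_log_le hr θ, ?_⟩
  refine tendsto_of_tendsto_of_tendsto_of_le_of_le' tendsto_const_nhds
    (Real.tendsto_const_div_log_sub_one_atTop 2)
    (Eventually.of_forall fun r => Real.iSup_nonneg fun θ => norm_nonneg _) ?_
  filter_upwards [eventually_gt_atTop (2 : ℝ)] with r hr
  exact Real.iSup_le (fun θ => (Complex.norm_ofReal_mul_exp_div_mul_log_le hr θ).trans
    (Real.div_sub_one_mul_log_sub_one_le hr))
    (div_nonneg zero_le_two (Real.log_pos (by linarith)).le)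
end

section
/- The function f(x) = 1/ln(1+x) is logarithmically completely monotonic on (0,∞); that is, with ln f(x) = -ln(ln(1+x)), one has (-1)^k · (d/dx)^k [ -ln(ln(1+x)) ] ≥ 0 for every x > 0 and every integer k ≥ 1. -/
/-! Since `∫_{s>1} b^{-s} ds = 1 / (b log b)`, the derivative of `-log (log b)` on `(1, ∞)` is
`-∫_{s>1} b^{-s} ds`. Differentiating under the integral sign turns `∫_{s>1} p(s) b^{-(s+a)} ds`
into `-∫_{s>1} p(s) (s+a) b^{-(s+a+1)} ds`, so the `(k+1)`-st derivative is `(-1)^(k+1)` times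
the integral of the positive integrand `s(s+1)⋯(s+k-1) b^{-(s+k)}`; then put `b = 1 + x`. -/

open Real MeasureTheory Set Filter Polynomial

theorem integrableOn_eval_mul_exp_neg_mul (p : ℝ[X]) {c : ℝ} (hc : 0 < c) (a : ℝ) :
    IntegrableOn (fun s => p.eval s * exp (-c * s)) (Ioi a) := by
  refine integrable_of_isBigO_exp_neg (half_pos hc) (by fun_prop) ?_
  have hp : (fun s => p.eval s) =O[atTop] fun s => exp (c / 2 * s) := by
    refine (isBigO_atTop_of_degree_le p (X ^ p.natDegree) ?_).trans ?_
    · rw [degree_X_pow]; exact degree_le_natDegree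
    · simpa using (isLittleO_pow_exp_pos_mul_atTop p.natDegree (half_pos hc)).isBigO
  refine (hp.mul (Asymptotics.isBigO_refl (fun s => exp (-c * s)) atTop)).congr_right
    fun s => ?_
  rw [← exp_add]; ring_nf

theorem integrableOn_eval_mul_rpow_neg (p : ℝ[X]) {b : ℝ} (hb : 1 < b) (a : ℝ) :
    IntegrableOn (fun s => p.eval s * b ^ (-(s + a))) (Ioi 1) := by
  have h : (fun s => p.eval s * b ^ (-(s + a))) =
      fun s => p.eval s * exp (-log b * s) * b ^ (-a) := by
    funext s
    rw [rpow_def_of_pos (by linarith), rpow_def_of_pos (by linarith), mul_assoc, ← exp_add]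
    ring_nf
  rw [h]
  exact (integrableOn_eval_mul_exp_neg_mul p (log_pos hb) 1).mul_const _

noncomputable def powerIntegral (p : ℝ[X]) (a b : ℝ) : ℝ :=
  ∫ s in Ioi (1 : ℝ), p.eval s * b ^ (-(s + a))

theorem powerIntegral_nonneg {p : ℝ[X]} (hp : ∀ s, 1 < s → 0 ≤ p.eval s) (a : ℝ) {b : ℝ}
    (hb : 0 ≤ b) : 0 ≤ powerIntegral p a b :=
  setIntegral_nonneg measurableSet_Ioi fun s hs => mul_nonneg (hp s hs) (rpow_nonneg hb _)

theorem hasDerivAt_powerIntegral (p : ℝ[X]) {a : ℝ} (ha : 0 ≤ a) {b : ℝ} (hb : 1 < b) :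
    HasDerivAt (powerIntegral p a) (-powerIntegral (p * (X + C a)) (a + 1) b) b := by
  obtain ⟨b₀, hb₀, hb₀b⟩ := exists_between hb
  have hF' : ∀ y, 0 < y → ∀ s, HasDerivAt (fun y => p.eval s * y ^ (-(s + a)))
      (-((p * (X + C a)).eval s * y ^ (-(s + (a + 1))))) y := fun y hy s =>
    ((hasDerivAt_rpow_const (Or.inl hy.ne')).const_mul _).congr_deriv (by
      simp only [eval_mul, eval_add, eval_X, eval_C]; ring_nf)
  have hdiff := hasDerivAt_integral_of_dominated_loc_of_deriv_le (μ := volume.restrict (Ioi 1))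
    (F := fun y s => p.eval s * y ^ (-(s + a)))
    (bound := fun s => ‖(p * (X + C a)).eval s * b₀ ^ (-(s + (a + 1)))‖)
    (Ioi_mem_nhds hb₀b) ?_ (integrableOn_eval_mul_rpow_neg p hb a) ?_ ?_
    (integrableOn_eval_mul_rpow_neg _ hb₀ _).norm
    (ae_of_all _ fun s y hy => hF' y (by linarith [mem_Ioi.mp hy]) s)
  · rw [powerIntegral, ← integral_neg]; exact hdiff.2
  · exact Eventually.of_forall fun y =>
      (p.continuous.measurable.mul (by fun_prop)).aestronglyMeasurable
  · exact (p * (X + C a)).continuous.measurable.mul (by fun_prop) |>.neg.aestronglyMeasurable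
  · filter_upwards [self_mem_ae_restrict measurableSet_Ioi] with s hs y hy
    have hb₀y : b₀ ≤ y := le_of_lt hy
    rw [norm_neg, norm_mul, norm_mul, norm_of_nonneg (rpow_nonneg (show 0 ≤ y by linarith) _),
      norm_of_nonneg (rpow_nonneg (show 0 ≤ b₀ by linarith) _)]
    exact mul_le_mul_of_nonneg_left (rpow_le_rpow_of_nonpos (zero_lt_one.trans hb₀) hb₀y
      (by linarith [mem_Ioi.mp hs])) (norm_nonneg _)

theorem powerIntegral_one_zero {b : ℝ} (hb : 1 < b) : powerIntegral 1 0 b = b⁻¹ / log b := by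
  have h : ∀ s : ℝ, eval s 1 * b ^ (-(s + 0)) = exp (-log b * s) := fun s => by
    rw [eval_one, one_mul, add_zero, rpow_def_of_pos (by linarith)]; ring_nf
  rw [powerIntegral, funext h, integral_exp_mul_Ioi (neg_lt_zero.mpr (log_pos hb)),
    mul_one, exp_neg, exp_log (by linarith), neg_div_neg_eq]

theorem hasDerivAt_neg_log_log {b : ℝ} (hb : 1 < b) :
    HasDerivAt (fun b => -log (log b)) (-powerIntegral 1 0 b) b := by
  rw [powerIntegral_one_zero hb]
  exact ((hasDerivAt_log (by linarith)).log (log_pos hb).ne').neg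

theorem iteratedDeriv_succ_neg_log_log (k : ℕ) {b : ℝ} (hb : 1 < b) :
    iteratedDeriv (k + 1) (fun b => -log (log b)) b =
      (-1) ^ (k + 1) * powerIntegral (ascPochhammer ℝ k) k b := by
  induction k generalizing b with
  | zero => simpa using (hasDerivAt_neg_log_log hb).deriv
  | succ k ih =>
    have hk : ascPochhammer ℝ (k + 1) = ascPochhammer ℝ k * (X + C (k : ℝ)) := by
      rw [ascPochhammer_succ_right, C_eq_natCast]
    have heq : iteratedDeriv (k + 1) (fun b => -log (log b)) =ᶠ[nhds b]
        fun y => (-1) ^ (k + 1) * powerIntegral (ascPochhammer ℝ k) k y :=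
      eventually_of_mem (Ioi_mem_nhds hb) fun y hy => ih hy
    rw [iteratedDeriv_succ, heq.deriv_eq,
      ((hasDerivAt_powerIntegral _ k.cast_nonneg hb).const_mul _).deriv, hk]
    push_cast
    ring

/-- The function `f(x) = 1/ln(1+x)` is logarithmically completely monotonic on `(0,∞)`:
with `ln f(x) = -ln(ln(1+x))`, one has `(-1)^k (d/dx)^k [-ln(ln(1+x))] ≥ 0` for every
`x > 0` and every integer `k ≥ 1`. -/
theorem stmt_12 :
    ∀ k : ℕ, 1 ≤ k → ∀ x : ℝ, 0 < x →
      0 ≤ (-1 : ℝ) ^ k *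
        iteratedDeriv k (fun x : ℝ => -Real.log (Real.log (1 + x))) x := by
  intro k hk x hx
  obtain ⟨m, rfl⟩ := Nat.exists_eq_add_of_le' hk
  rw [congrFun (iteratedDeriv_comp_const_add _ (fun b => -log (log b)) 1) x,
    iteratedDeriv_succ_neg_log_log m (by linarith), ← mul_assoc, ← pow_add,
    Even.neg_one_pow ⟨m + 1, rfl⟩, one_mul]
  exact powerIntegral_nonneg (fun s hs => (ascPochhammer_pos m s (by linarith)).le) _
    (by linarith)
end

section
/- One has ∫₁^∞ 1/(((ln(t-1))² + π²)·t) dt = 1/2; equivalently, ∫₀¹ 1/(s·((ln(1/s - 1))² + π²)) ds = 1/2. -/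
open MeasureTheory Real

/-! With σ the logistic sigmoid, the substitutions `t = 1 + exp x` and `s = σ x` (followed by
`x ↦ -x`) turn both integrals into `∫ σ x / (x² + π²) dx` over `ℝ`. Since `σ x + σ (-x) = 1` and
`1 / (x² + π²)` is even, this is half of `∫ 1 / (x² + π²) dx = 1`, the total mass of the Cauchy
density with scale `π`. -/

open Set ProbabilityTheory

section

variable {E : Type*} [NormedAddCommGroup E] [NormedSpace ℝ E]

theorem integral_sigmoid_smul_of_even {g : ℝ → E} (hg : Integrable g)
    (heven : ∀ x, g (-x) = g x) :
    ∫ x, sigmoid x • g x = (2 : ℝ)⁻¹ • ∫ x, g x := by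
  have hint : Integrable fun x ↦ sigmoid x • g x :=
    hg.bdd_smul 1 continuous_sigmoid.aestronglyMeasurable
      (ae_of_all _ fun x ↦ by simp [abs_of_pos (sigmoid_pos x), sigmoid_le_one x])
  have hsymm : ∫ x, sigmoid x • g x = (∫ x, g x) - ∫ x, sigmoid x • g x := by
    rw [← integral_sub hg hint, ← integral_neg_eq_self]
    simp only [sigmoid_neg, heven, sub_smul, one_smul]
  rw [eq_inv_smul_iff₀ two_ne_zero, two_smul]
  nth_rewrite 1 [hsymm]
  exact sub_add_cancel _ _

theorem integral_comp_one_add_exp (g : ℝ → E) :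
    ∫ x, exp x • g (1 + exp x) = ∫ y in Ioi 1, g y := by
  have hrange : range (fun x ↦ 1 + exp x) = Ioi 1 := by
    rw [range_comp' (1 + ·) exp, range_exp, image_const_add_Ioi, add_zero]
  have := integral_image_eq_integral_abs_deriv_smul MeasurableSet.univ
    (fun x _ ↦ ((hasDerivAt_exp x).const_add 1).hasDerivWithinAt)
    (fun x _ y _ hxy ↦ exp_injective (add_left_cancel hxy)) g
  rw [image_univ, hrange, Measure.restrict_univ] at this
  simp [this, abs_of_pos (exp_pos _)]

theorem integral_comp_sigmoid (g : ℝ → E) :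
    ∫ x, (sigmoid x * (1 - sigmoid x)) • g (sigmoid x) = ∫ y in Ioo 0 1, g y := by
  have := integral_image_eq_integral_abs_deriv_smul MeasurableSet.univ
    (fun x _ ↦ (hasDerivAt_sigmoid x).hasDerivWithinAt) sigmoid_injective.injOn g
  rw [image_univ, range_sigmoid, Measure.restrict_univ] at this
  simp [this, abs_of_pos (mul_pos (sigmoid_pos _) (sub_pos.2 (sigmoid_lt_one _)))]

end

theorem cauchyPDFReal_zero_pi (x : ℝ) : cauchyPDFReal 0 NNReal.pi x = (x ^ 2 + π ^ 2)⁻¹ := by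
  rw [cauchyPDFReal_def, NNReal.coe_real_pi, sub_zero, inv_mul_cancel₀ pi_ne_zero, one_mul]

theorem integral_sigmoid_mul_inv_sq_add_pi_sq :
    ∫ x, sigmoid x * (x ^ 2 + π ^ 2)⁻¹ = 1 / 2 := by
  have heven (x : ℝ) : cauchyPDFReal 0 NNReal.pi (-x) = cauchyPDFReal 0 NNReal.pi x := by
    simp only [cauchyPDFReal_zero_pi, even_two.neg_pow]
  have := integral_sigmoid_smul_of_even (integrable_cauchyPDFReal 0) heven
  rw [integral_cauchyPDFReal_eq_one 0 NNReal.pi_pos.ne'] at this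
  simpa [cauchyPDFReal_zero_pi] using this

/-- `∫₁^∞ 1/(((ln(t-1))² + π²)·t) dt = 1/2`; equivalently,
`∫₀¹ 1/(s·((ln(1/s - 1))² + π²)) ds = 1/2`. -/
theorem stmt_17 :
    (∫ t in Set.Ioi (1 : ℝ), 1 / (((Real.log (t - 1)) ^ 2 + Real.pi ^ 2) * t)) = 1 / 2 ∧
    (∫ s in Set.Ioo (0 : ℝ) 1, 1 / (s * ((Real.log (1 / s - 1)) ^ 2 + Real.pi ^ 2))) = 1 / 2 := by
  constructor
  · rw [← integral_comp_one_add_exp, ← integral_sigmoid_mul_inv_sq_add_pi_sq]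
    congr 1 with x
    rw [add_sub_cancel_left, log_exp, smul_eq_mul, sigmoid_def, exp_neg]
    field_simp
    ring
  · rw [← integral_comp_sigmoid, ← integral_sigmoid_mul_inv_sq_add_pi_sq, ← integral_neg_eq_self]
    congr 1 with x
    have hlog (y : ℝ) : log (1 / sigmoid y - 1) = -y := by
      rw [sigmoid_def, one_div, inv_inv, add_sub_cancel_left, log_exp]
    rw [hlog, neg_neg, smul_eq_mul, sigmoid_neg x, sub_sub_cancel]
    field_simp [(sub_pos.2 (sigmoid_lt_one x)).ne']
end
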